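/- arXiv:1806.01804 — 5 statements merged into one kernel-verified Lean document; each statement's English description precedes it below -/
import Mathlib

section
/- Let x be a node of a rooted tree, z a proper ancestor of x at distance d = depth(x) − depth(z), and i = ⌈log₂ d⌉. Let P_i(x) be the multiset of labels on the upward path of 1+2^i nodes starting at x (truncated at the root). Then every τ-majority of the path from x to z (inclusive) is a (τ/2)-majority of P_i(x). -/
/-!
Since `d ≤ 2 ^ ⌈log₂ d⌉ ≤ 2d` and `d ≤ depth x`, the path from `x` to `z` is a prefix of the
upward path `P_i(x)`, and `P_i(x)` has at most twice as many nodes. Enlarging a multiset can only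
increase the count of `ℓ`, so `ℓ` keeps more than half of its required share.
-/

theorem Nat.pow_clog_le_mul {b n : ℕ} (hb : 1 < b) (hn : 0 < n) : b ^ Nat.clog b n ≤ b * n := by
  rcases Nat.lt_or_ge 1 n with hn1 | hn1
  · have hpred : b ^ (Nat.clog b n - 1) < n := Nat.pow_pred_clog_lt_self hb hn1
    calc b ^ Nat.clog b n = b * b ^ (Nat.clog b n - 1) := by
          rw [← pow_succ', Nat.succ_eq_add_one, Nat.sub_one_add_one (Nat.clog_pos hb hn1).ne']
      _ ≤ b * n := Nat.mul_le_mul_left b hpred.le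
  · rw [Nat.clog_of_right_le_one hn1, pow_zero]
    nlinarith

theorem Multiset.map_range_le_map_range {α : Type*} (f : ℕ → α) {m n : ℕ} (h : m ≤ n) :
    (Multiset.range m).map f ≤ (Multiset.range n).map f :=
  Multiset.map_le_map (Multiset.range_le.mpr h)

theorem Multiset.majority_of_le {α : Type*} [DecidableEq α] {s t : Multiset α} {τ c : ℝ} {a : α}
    (hst : s ≤ t) (hτ : 0 ≤ τ) (hc : 0 < c) (hcard : (t.card : ℝ) ≤ c * s.card)
    (hmaj : τ * s.card < s.count a) :
    τ / c * t.card < t.count a :=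
  calc τ / c * t.card ≤ τ / c * (c * s.card) := by gcongr
    _ = τ * s.card := by field_simp
    _ < s.count a := hmaj
    _ ≤ t.count a := by exact_mod_cast Multiset.count_le_of_le a hst

theorem stmt4_general (τ : ℝ) (hτ0 : 0 < τ)
    (V : Type) (parent : V → V) (label : V → ℕ) (depth : V → ℕ)
    (x z : V) (d : ℕ) (hd : 0 < d)
    (hdd : d = depth x - depth z) (ℓ : ℕ) :
    let i := Nat.clog 2 d
    let Pi : Multiset ℕ :=
      (Multiset.range (min (2 ^ i) (depth x) + 1)).map (fun k => label (parent^[k] x))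
    let path : Multiset ℕ := (Multiset.range (d + 1)).map (fun k => label (parent^[k] x))
    τ * (path.card : ℝ) < (path.count ℓ : ℝ) →
      (τ / 2) * (Pi.card : ℝ) < (Pi.count ℓ : ℝ) := by
  intro i Pi path hmaj
  have hd_le_pow : d ≤ 2 ^ i := Nat.le_pow_clog one_lt_two d
  have hpow_le : 2 ^ i ≤ 2 * d := Nat.pow_clog_le_mul one_lt_two hd
  have hd_le_depth : d ≤ depth x := hdd ▸ Nat.sub_le _ _
  have hprefix : path ≤ Pi :=
    Multiset.map_range_le_map_range _ (by omega)
  have hcard : (Pi.card : ℝ) ≤ 2 * path.card := by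
    simp only [Pi, path, Multiset.card_map, Multiset.card_range]
    norm_cast
    omega
  exact Multiset.majority_of_le hprefix hτ0.le two_pos hcard hmaj

/-- Let x be a node, z a proper ancestor at distance d, and i = ⌈log₂ d⌉. Every
τ-majority of the path from x to z (inclusive) is a (τ/2)-majority of the multiset
P_i(x) of labels on the upward path of 1+2^i nodes starting at x (truncated at the root,
i.e. at depth(x) ancestors). -/
theorem stmt4 (τ : ℝ) (hτ0 : 0 < τ) (hτ1 : τ < 1)
    (V : Type) (parent : V → V) (label : V → ℕ) (depth : V → ℕ)
    (x z : V) (d : ℕ) (hd : 0 < d) (hdz : depth z < depth x)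
    (hdd : d = depth x - depth z) (hz : z = parent^[d] x) (ℓ : ℕ) :
    let i := Nat.clog 2 d
    let Pi : Multiset ℕ :=
      (Multiset.range (min (2 ^ i) (depth x) + 1)).map (fun k => label (parent^[k] x))
    let path : Multiset ℕ := (Multiset.range (d + 1)).map (fun k => label (parent^[k] x))
    τ * (path.card : ℝ) < (path.count ℓ : ℝ) →
      (τ / 2) * (Pi.card : ℝ) < (Pi.count ℓ : ℝ) :=
  stmt4_general τ hτ0 V parent label depth x z d hd hdd ℓ
end

section
/- In a rooted tree of n nodes, mark every node whose height is at least ⌈1/τ⌉ and whose depth is a multiple of ⌈1/τ⌉. Then the number of marked nodes is at most τ·n. -/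
/-- Mark every node whose height is at least ⌈1/τ⌉ and whose depth is a multiple of
⌈1/τ⌉. Then there are at most τ·n marked nodes. -/
theorem stmt5 (τ : ℝ) (hτ0 : 0 < τ) (hτ1 : τ < 1)
    (V : Type) [Fintype V] (n : ℕ) (hn : Fintype.card V = n)
    (parent : V → V) (root : V) (depth height : V → ℕ)
    (hroot : parent root = root) (hd0 : depth root = 0)
    (hds : ∀ v, v ≠ root → depth v = depth (parent v) + 1)
    (hreach : ∀ v, parent^[depth v] v = root)
    (hheight : ∀ v k, k ≤ height v ↔ ∃ u, parent^[k] u = v ∧ depth u = depth v + k) :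
    (Nat.card {v : V | ⌈1 / τ⌉₊ ≤ height v ∧ ⌈1 / τ⌉₊ ∣ depth v} : ℝ) ≤ τ * n := by
  classical
  set M := ⌈1 / τ⌉₊ with hMdef
  have hM1 : 1 ≤ M := Nat.one_le_ceil_iff.mpr (by positivity)
  -- depth decreases by at most 1 per parent step
  have lemA : ∀ (i : ℕ) (u : V), depth u ≤ depth (parent^[i] u) + i := by
    intro i
    induction i with
    | zero => intro u; simp
    | succ i ih =>
      intro u
      rw [Function.iterate_succ_apply']
      have hI := ih u
      by_cases hwr : parent^[i] u = root
      · rw [hwr, hroot]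
        rw [hwr, hd0] at hI
        omega
      · have := hds _ hwr
        omega
  set S := {v : V | M ≤ height v ∧ M ∣ depth v} with hS
  -- choose a descendant for each marked node
  have hch : ∀ v : S, ∃ u, parent^[M] u = (v : V) ∧ depth u = depth (v : V) + M :=
    fun v => (hheight v M).mp v.2.1
  choose u hu hdu using hch
  have hdepth : ∀ (v : S) (i : ℕ), i ≤ M →
      depth (parent^[i] (u v)) = depth (v : V) + (M - i) := by
    intro v i hi
    have hlow := lemA i (u v)
    have hiter : parent^[M - i] (parent^[i] (u v)) = (v : V) := by
      rw [← Function.iterate_add_apply, Nat.sub_add_cancel hi, hu]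
    have hup := lemA (M - i) (parent^[i] (u v))
    rw [hiter] at hup
    have := hdu v
    omega
  -- the injection
  set f : S × Fin M → V := fun p => parent^[p.2.val] (u p.1) with hf
  have hinj : Function.Injective f := by
    rintro ⟨v, i⟩ ⟨v', i'⟩ heq
    simp only [hf] at heq
    have hdv := hdepth v i.val (le_of_lt i.2)
    have hdv' := hdepth v' i'.val (le_of_lt i'.2)
    rw [heq] at hdv
    -- divisibility
    obtain ⟨a, ha⟩ := v.2.2
    obtain ⟨b, hb⟩ := v'.2.2
    have hii : i.val = i'.val := by
      rw [hdv'] at hdv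
      rw [ha, hb] at hdv
      rcases le_total a b with hab | hab
      · obtain ⟨c, rfl⟩ := Nat.exists_eq_add_of_le hab
        rcases Nat.eq_zero_or_pos c with rfl | hc
        · simp only [Nat.add_zero] at hdv; omega
        · have : M * 1 ≤ M * c := Nat.mul_le_mul_left M hc
          rw [Nat.mul_add] at hdv
          have hi2 := i.2; have hi2' := i'.2
          omega
      · obtain ⟨c, rfl⟩ := Nat.exists_eq_add_of_le hab
        rcases Nat.eq_zero_or_pos c with rfl | hc
        · simp only [Nat.add_zero] at hdv; omega
        · have : M * 1 ≤ M * c := Nat.mul_le_mul_left M hc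
          rw [Nat.mul_add] at hdv
          have hi2 := i.2; have hi2' := i'.2
          omega
    have hvv : (v : V) = (v' : V) := by
      have h1 : parent^[M - i.val] (parent^[i.val] (u v)) = (v : V) := by
        rw [← Function.iterate_add_apply, Nat.sub_add_cancel (le_of_lt i.2), hu]
      have h2 : parent^[M - i'.val] (parent^[i'.val] (u v')) = (v' : V) := by
        rw [← Function.iterate_add_apply, Nat.sub_add_cancel (le_of_lt i'.2), hu]
      rw [← h1, ← h2, heq, hii]
    exact Prod.ext (Subtype.ext hvv) (Fin.ext hii)
  have hcard : Fintype.card S * M ≤ n := by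
    have := Fintype.card_le_of_injective f hinj
    rwa [Fintype.card_prod, Fintype.card_fin, hn] at this
  have hNS : Nat.card S = Fintype.card S := Nat.card_eq_fintype_card
  rw [show {v : V | M ≤ height v ∧ M ∣ depth v} = S from rfl] at *
  rw [hNS]
  -- real arithmetic
  have hMτ : (1 : ℝ) ≤ τ * M := by
    have h1 : (1 / τ : ℝ) ≤ M := Nat.le_ceil _
    rw [div_le_iff₀ hτ0] at h1
    nlinarith
  have hcR : (Fintype.card S : ℝ) * M ≤ n := by exact_mod_cast hcard
  nlinarith [Nat.cast_nonneg (α := ℝ) (Fintype.card S), mul_le_mul_of_nonneg_left hcR (le_of_lt hτ0),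
    mul_nonneg (le_of_lt hτ0) (Nat.cast_nonneg (Fintype.card S))]
end

section
/- If a tree T' is the subtree of T induced by the set of nodes having more than s descendants (this set is closed under taking parents), then T' has at most n/s leaves, where n is the number of nodes of T. -/
/-- If T' is the subtree of T induced by the nodes with more than s descendants
(a parent-closed set), then T' has at most n/s leaves, where a leaf of T' is a node
of T' none of whose children is in T'. -/
theorem stmt11 (V : Type) [Fintype V] (n : ℕ) (hn : Fintype.card V = n)
    (parent : V → V) (root : V) (depth : V → ℕ)
    (hroot : parent root = root) (hd0 : depth root = 0)
    (hds : ∀ v, v ≠ root → depth v = depth (parent v) + 1)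
    (hreach : ∀ v, parent^[depth v] v = root)
    (s : ℕ) (hs : 0 < s) :
    let subtreesize : V → ℕ := fun v => Nat.card {u : V | ∃ k, parent^[k] u = v}
    let L : Set V := {u | s < subtreesize u}
    (Nat.card {u : V | u ∈ L ∧ ∀ w, parent w = u → w ≠ u → w ∉ L} : ℝ) ≤ (n : ℝ) / s := by
  classical
  intro subtreesize L
  -- descendants finset
  set D : V → Finset V := fun v => Finset.univ.filter (fun w => ∃ k, parent^[k] w = v) with hD
  have hsize : ∀ v, subtreesize v = (D v).card := by
    intro v
    show Nat.card {u : V | ∃ k, parent^[k] u = v} = _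
    rw [Nat.card_eq_fintype_card, Fintype.card_subtype]
    congr 1
  have hmemD : ∀ w v, w ∈ D v ↔ ∃ k, parent^[k] w = v := by
    intro w v; simp [hD]
  -- parent-closedness of L
  have hmono : ∀ v, D v ⊆ D (parent v) := by
    intro v w hw
    rw [hmemD] at hw ⊢
    obtain ⟨k, hk⟩ := hw
    exact ⟨k + 1, by rw [Function.iterate_succ_apply', hk]⟩
  have hLparent : ∀ u, u ∈ L → parent u ∈ L := by
    intro u hu
    have : s < subtreesize u := hu
    show s < subtreesize (parent u)
    rw [hsize] at this ⊢
    exact lt_of_lt_of_le this (Finset.card_le_card (hmono u))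
  have anc_in_L : ∀ (k : ℕ) (u : V), u ∈ L → parent^[k] u ∈ L := by
    intro k
    induction k with
    | zero => intro u hu; simpa using hu
    | succ k ih =>
      intro u hu
      rw [Function.iterate_succ_apply']
      exact hLparent _ (ih u hu)
  -- key lemma: if v is a strict ancestor of u ∈ L, then v has a child ≠ v in L
  have key : ∀ m u v, 0 < m → parent^[m] u = v → u ≠ v → u ∈ L →
      ∃ x, parent x = v ∧ x ≠ v ∧ x ∈ L := by
    intro m
    induction m using Nat.strong_induction_on with
    | _ m ih =>
      intro u v hm hpm huv hu
      obtain ⟨m', rfl⟩ : ∃ m', m = m' + 1 := ⟨m - 1, by omega⟩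
      have hpx : parent (parent^[m'] u) = v := by
        rw [← hpm, Function.iterate_succ_apply']
      have hxL : parent^[m'] u ∈ L := anc_in_L m' u hu
      by_cases hxv : parent^[m'] u = v
      · have hm' : 0 < m' := by
          rcases Nat.eq_zero_or_pos m' with h0 | h
          · subst h0; simp at hxv; exact absurd hxv huv
          · exact h
        exact ih m' (by omega) u v hm' hxv huv hu
      · exact ⟨parent^[m'] u, hpx, hxv, hxL⟩
  -- leaves finset
  set P : V → Prop := fun u => u ∈ L ∧ ∀ w, parent w = u → w ≠ u → w ∉ L with hP
  set F : Finset V := Finset.univ.filter P with hF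
  have hcard : Nat.card {u : V | u ∈ L ∧ ∀ w, parent w = u → w ≠ u → w ∉ L} = F.card := by
    rw [Nat.card_eq_fintype_card]
    simp only [hF, hP]
    rw [← Set.toFinset_card, Set.toFinset_setOf]
  -- comparability: two leaves with common descendant are equal
  have hcomp : ∀ u v w k l, P u → P v → parent^[k] w = u → parent^[l] w = v → k ≤ l → u = v := by
    intro u v w k l hu hv hk hl hkl
    by_contra huv
    have hml : parent^[l - k] u = v := by
      rw [← hk, ← Function.iterate_add_apply, Nat.sub_add_cancel hkl, hl]
    have hm : 0 < l - k := by
      rcases Nat.eq_zero_or_pos (l - k) with h0 | h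
      · rw [h0] at hml; simp at hml; exact absurd hml huv
      · exact h
    obtain ⟨x, hpx, hxv, hxL⟩ := key (l - k) u v hm hml huv hu.1
    exact hv.2 x hpx hxv hxL
  -- disjointness
  have hdisj : ∀ u ∈ F, ∀ v ∈ F, u ≠ v → Disjoint (D u) (D v) := by
    intro u hu v hv huv
    rw [Finset.mem_filter] at hu hv
    rw [Finset.disjoint_left]
    intro w hwu hwv
    rw [hmemD] at hwu hwv
    obtain ⟨k, hk⟩ := hwu
    obtain ⟨l, hl⟩ := hwv
    rcases le_total k l with h | h
    · exact huv (hcomp u v w k l hu.2 hv.2 hk hl h)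
    · exact huv (hcomp v u w l k hv.2 hu.2 hl hk h).symm
  -- counting
  have hsum : F.card * (s + 1) ≤ n := by
    calc F.card * (s + 1) = ∑ _u ∈ F, (s + 1) := by
          rw [Finset.sum_const, smul_eq_mul]
      _ ≤ ∑ u ∈ F, (D u).card := by
          apply Finset.sum_le_sum
          intro u hu
          rw [Finset.mem_filter] at hu
          have : s < subtreesize u := hu.2.1
          rw [hsize] at this
          omega
      _ = (F.biUnion D).card := (Finset.card_biUnion hdisj).symm
      _ ≤ Fintype.card V := Finset.card_le_univ _
      _ = n := hn
  have hns : F.card * s ≤ n := le_trans (by nlinarith) hsum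
  rw [hcard, div_eq_inv_mul, ← div_eq_inv_mul, le_div_iff₀ (by exact_mod_cast hs)]
  exact_mod_cast hns
end

section
/- Let P[1..2n] be the balanced-parentheses (DFS) encoding of a rooted tree, S the sequence of node labels in preorder and S' the sequence of node labels in postorder. Then for any node x, with i the position of x's opening parenthesis in P, the number of nodes labeled ℓ on the path from x to the root equals rank_ℓ(S, rank₁(P, i)) − rank_ℓ(S', rank₀(P, i)). -/
/-- Balanced-parentheses counting of labels on a root path. The tree is given by
opening/closing parenthesis positions openPos, closePos in [1..2n] (pairwise distinct,
properly nested), and the ancestor-or-self relation coincides with enclosure. Since the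
preorder sequence S lists labels in increasing order of openPos and the postorder
sequence S' in increasing order of closePos, rank_ℓ(S, rank₁(P,i)) is the number of
nodes y with label ℓ and openPos y ≤ i, and rank_ℓ(S', rank₀(P,i)) is the number of
nodes y with label ℓ and closePos y ≤ i. The number of nodes labeled ℓ on the path
from x to the root equals their difference, for i the opening position of x. -/
theorem stmt16 (V : Type) [Fintype V] (n : ℕ) (hn : Fintype.card V = n)
    (parent : V → V) (label : V → ℕ)
    (openPos closePos : V → ℕ)
    (hoc : ∀ y, openPos y < closePos y)
    (hlo : ∀ y, 1 ≤ openPos y) (hhi : ∀ y, closePos y ≤ 2 * n)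
    (hinj : Function.Injective openPos) (hinj' : Function.Injective closePos)
    (hdisj : ∀ y y', openPos y ≠ closePos y')
    (hbal : ∀ y y', openPos y < openPos y' →
      closePos y' < closePos y ∨ closePos y < openPos y')
    (hanc : ∀ x y : V, (∃ k, parent^[k] x = y) ↔
      (openPos y ≤ openPos x ∧ closePos x ≤ closePos y))
    (x : V) (ℓ : ℕ) (i : ℕ) (hi : i = openPos x) :
    Nat.card {y : V | (∃ k, parent^[k] x = y) ∧ label y = ℓ}
      = Nat.card {y : V | label y = ℓ ∧ openPos y ≤ i}
        - Nat.card {y : V | label y = ℓ ∧ closePos y ≤ i} := by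

  classical
  subst hi
  set A := {y : V | label y = ℓ ∧ openPos y ≤ openPos x} with hA
  set B := {y : V | label y = ℓ ∧ closePos y ≤ openPos x} with hB
  set C := {y : V | (∃ k, parent^[k] x = y) ∧ label y = ℓ} with hC
  have hsplit : A = B ∪ C := by
    ext y
    simp only [hA, hB, hC, Set.mem_setOf_eq, Set.mem_union]
    constructor
    · rintro ⟨hl, hle⟩
      rcases lt_or_eq_of_le hle with hlt | heq
      · rcases lt_or_ge (openPos x) (closePos y) with hcy | hcy
        · right
          refine ⟨(hanc x y).mpr ⟨hle, ?_⟩, hl⟩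
          rcases hbal y x hlt with h | h
          · exact le_of_lt h
          · omega
        · exact Or.inl ⟨hl, hcy⟩
      · right
        have : y = x := hinj heq
        subst this
        exact ⟨⟨0, rfl⟩, hl⟩
    · rintro (⟨hl, hle⟩ | ⟨hk, hl⟩)
      · exact ⟨hl, le_trans (le_of_lt (hoc y)) hle⟩
      · exact ⟨hl, ((hanc x y).mp hk).1⟩
  have hdisjBC : Disjoint B C := by
    rw [Set.disjoint_left]
    rintro y ⟨hl, hcy⟩ ⟨hk, -⟩
    have h1 := ((hanc x y).mp hk).2
    have h2 := hoc x
    omega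
  have hBf : B.Finite := Set.toFinite _
  have hCf : C.Finite := Set.toFinite _
  have hcard : A.ncard = B.ncard + C.ncard := by
    rw [hsplit, Set.ncard_union_eq hdisjBC hBf hCf]
  have h1 : Nat.card A = A.ncard := rfl
  simp only [Nat.card_coe_set_eq] at *
  omega
end

section
/- If x is a marked node whose candidate sets C_i(x) store, for every 0 ≤ i ≤ ⌈log₂ depth(x)⌉, all (τ/2)-majorities of the upward path P_i(x) of length min(1+2^i, 1+depth(x)) from x, then for every proper ancestor z of x, all τ-majorities of the path from x to z belong to C_{⌈log₂ (depth(x)−depth(z))⌉}(x), and |C_i(x)| ≤ 2/τ for every i. -/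
/-!
A label with multiplicity `> τ (1 + d)` on a path of `1 + d` nodes keeps multiplicity
`> (τ/2) (1 + 2^i)` on the longer path of `1 + min(2^i, depth x)` nodes, because
`d ≤ 2^i < 2d` for `i = ⌈log₂ d⌉`. The size bound is counting: `k` labels each occurring
more than `c |M|` times in `M` force `k c |M| < |M|`.
-/

theorem Nat.two_pow_clog_lt_two_mul {d : ℕ} (hd : 0 < d) : 2 ^ Nat.clog 2 d < 2 * d := by
  rcases Nat.lt_or_ge 1 d with hd1 | hd1
  · have hpos : 0 < Nat.clog 2 d := Nat.clog_pos one_lt_two hd1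
    have hpred : 2 ^ (Nat.clog 2 d - 1) < d := Nat.pow_lt_of_lt_clog (by omega)
    calc 2 ^ Nat.clog 2 d = 2 * 2 ^ (Nat.clog 2 d - 1) := by
          rw [← pow_succ']; congr 1; omega
      _ < 2 * d := by omega
  · obtain rfl : d = 1 := by omega
    simp

namespace Multiset

variable {α : Type*} [DecidableEq α]

theorem card_setOf_lt_count_le {c : ℝ} (hc : 0 < c) (M : Multiset α) :
    (Nat.card {a | c * (card M : ℝ) < (count a M : ℝ)} : ℝ) ≤ 1 / c := by
  set S := M.toFinset.filter fun a => c * (card M : ℝ) < (count a M : ℝ)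
  have hS : {a | c * (card M : ℝ) < (count a M : ℝ)} = ↑S := by
    ext a
    simp only [S, Finset.coe_filter, mem_toFinset]
    refine ⟨fun h => ⟨count_pos.mp ?_, h⟩, And.right⟩
    exact_mod_cast (mul_nonneg hc.le (Nat.cast_nonneg _)).trans_lt h
  rw [hS, Nat.card_coe_set_eq, Set.ncard_coe_finset]
  rcases eq_or_ne M 0 with rfl | hM
  · simp [S, hc.le]
  have hcount : (S.card : ℝ) * (c * card M) ≤ card M :=
    calc (S.card : ℝ) * (c * card M) ≤ ∑ a ∈ S, (count a M : ℝ) := by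
          simpa using Finset.card_nsmul_le_sum S _ _ fun a ha => (Finset.mem_filter.mp ha).2.le
      _ ≤ ∑ a ∈ M.toFinset, (count a M : ℝ) :=
          Finset.sum_le_sum_of_subset_of_nonneg (Finset.filter_subset _ _) fun _ _ _ => by positivity
      _ = card M := by exact_mod_cast toFinset_sum_count_eq M
  have hM' : (0 : ℝ) < card M := by exact_mod_cast card_pos.mpr hM
  rw [le_div_iff₀ hc]
  nlinarith

theorem count_map_range_mono (f : ℕ → α) (a : α) {m n : ℕ} (h : m ≤ n) :
    count a ((range m).map f) ≤ count a ((range n).map f) :=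
  count_le_of_le a (map_le_map (range_le.mpr h))

theorem half_lt_count_map_range_of_lt_count {τ : ℝ} (hτ : 0 < τ) (f : ℕ → α) (a : α)
    {d m : ℕ} (hdm : d ≤ m) (hmd : m < 2 * d)
    (h : τ * (card ((range (d + 1)).map f) : ℝ) < (count a ((range (d + 1)).map f) : ℝ)) :
    τ / 2 * (card ((range (m + 1)).map f) : ℝ) < (count a ((range (m + 1)).map f) : ℝ) := by
  simp only [card_map, card_range, Nat.cast_add, Nat.cast_one] at h ⊢
  have hm : (m : ℝ) + 1 ≤ 2 * d := by exact_mod_cast hmd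
  have hcount : (count a ((range (d + 1)).map f) : ℝ) ≤ count a ((range (m + 1)).map f) := by
    exact_mod_cast count_map_range_mono f a (by omega)
  nlinarith

end Multiset

theorem stmt18_general (τ : ℝ) (hτ0 : 0 < τ)
    (V : Type) (parent : V → V) (label : V → ℕ) (depth : V → ℕ) (x : V) :
    let P : ℕ → Multiset ℕ := fun i =>
      (Multiset.range (min (2 ^ i) (depth x) + 1)).map (fun k => label (parent^[k] x))
    let C : ℕ → Set ℕ := fun i =>
      {ℓ | (τ / 2) * ((P i).card : ℝ) < (((P i).count ℓ : ℕ) : ℝ)}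
    (∀ d : ℕ, 0 < d → d ≤ depth x → ∀ ℓ : ℕ,
        τ * ((((Multiset.range (d + 1)).map (fun k => label (parent^[k] x))).card : ℕ) : ℝ)
            < ((((Multiset.range (d + 1)).map (fun k => label (parent^[k] x))).count ℓ : ℕ) : ℝ)
        → ℓ ∈ C (Nat.clog 2 d)) ∧
    (∀ i ≤ Nat.clog 2 (depth x), (Nat.card (C i) : ℝ) ≤ 2 / τ) := by
  intro P C
  refine ⟨fun d hd hdx ℓ hmaj => ?_, fun i _ => ?_⟩
  · have hd2i : d ≤ 2 ^ Nat.clog 2 d := Nat.le_pow_clog one_lt_two d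
    have h2i := Nat.two_pow_clog_lt_two_mul hd
    exact Multiset.half_lt_count_map_range_of_lt_count hτ0 _ ℓ (le_min hd2i hdx)
      (by omega) hmaj
  · simpa [one_div_div] using Multiset.card_setOf_lt_count_le (half_pos hτ0) (P i)

/-- If for every 0 ≤ i ≤ ⌈log₂ depth(x)⌉ the candidate set C_i(x) is the set of
(τ/2)-majorities of the upward path P_i(x) of length min(1+2^i, 1+depth(x)) from x,
then for every proper ancestor z of x (at distance d = depth(x) − depth(z)) all
τ-majorities of the path from x to z belong to C_{⌈log₂ d⌉}(x), and |C_i(x)| ≤ 2/τ. -/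
theorem stmt18 (τ : ℝ) (hτ0 : 0 < τ) (hτ1 : τ < 1)
    (V : Type) (parent : V → V) (label : V → ℕ) (depth : V → ℕ) (x : V) :
    let P : ℕ → Multiset ℕ := fun i =>
      (Multiset.range (min (2 ^ i) (depth x) + 1)).map (fun k => label (parent^[k] x))
    let C : ℕ → Set ℕ := fun i =>
      {ℓ | (τ / 2) * ((P i).card : ℝ) < (((P i).count ℓ : ℕ) : ℝ)}
    (∀ d : ℕ, 0 < d → d ≤ depth x → ∀ ℓ : ℕ,
        τ * ((((Multiset.range (d + 1)).map (fun k => label (parent^[k] x))).card : ℕ) : ℝ)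
            < ((((Multiset.range (d + 1)).map (fun k => label (parent^[k] x))).count ℓ : ℕ) : ℝ)
        → ℓ ∈ C (Nat.clog 2 d)) ∧
    (∀ i ≤ Nat.clog 2 (depth x), (Nat.card (C i) : ℝ) ≤ 2 / τ) :=
  stmt18_general τ hτ0 V parent label depth x
end
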